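/- Let A ⊆ ℝ^n be a measurable set with Gaussian measure μ = γ_n(A) > 0. Then Σ_{1 ≤ i < j ≤ n} (∫_A x_i x_j dγ_n(x))² ≤ 2e²·μ²·(ln(e/μ))². -/

import Mathlib

open MeasureTheory ProbabilityTheory Finset Real

open Matrix

open scoped ENNReal NNReal

noncomputable section


lemma abs_le_exp_sq (u : ℝ) : |u| ≤ 4 * rexp (u ^ 2 / 8) := by
  have h := Real.add_one_le_exp (u ^ 2 / 8)
  have : |u| ≤ 4 + u ^ 2 / 2 := by
    rcases abs_cases u with ⟨h1, _⟩ | ⟨h1, _⟩ <;> nlinarith [sq_nonneg (u - 1), sq_nonneg (u + 1)]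
  nlinarith

lemma inv_one_sub_le_exp {u : ℝ} (h1 : |u| ≤ 1/2) : (1 - u)⁻¹ ≤ rexp (u + u ^ 2) := by
  rw [abs_le] at h1
  have hu : (0:ℝ) < 1 - u := by linarith [h1.2]
  rw [inv_le_iff_one_le_mul₀' hu]
  rcases le_or_gt u 0 with hc | hc
  · have h := Real.add_one_le_exp (u + u ^ 2)
    nlinarith
  · have h := Real.quadratic_le_exp_of_nonneg (x := u + u ^ 2) (by positivity)
    have hu2 : u ≤ 1/2 := h1.2
    have h3 : u ^ 3 ≤ u ^ 2 * (1/2) := by nlinarith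
    have h4 : u ^ 4 ≤ u ^ 2 * (1/4) := by nlinarith
    have h5 : u ^ 5 ≤ u ^ 2 * (1/8) := by nlinarith
    have key : (1:ℝ) ≤ (1 + (u + u^2) + (u + u^2)^2/2) * (1 - u) := by nlinarith [sq_nonneg u]
    have h6 := mul_le_mul_of_nonneg_right h (le_of_lt hu)
    linarith

lemma inv_sqrt_one_sub_le_exp {u : ℝ} (h1 : |u| ≤ 1/2) :
    (Real.sqrt (1 - u))⁻¹ ≤ rexp ((u + u ^ 2) / 2) := by
  rw [← Real.sqrt_inv, Real.exp_half]
  exact Real.sqrt_le_sqrt (inv_one_sub_le_exp h1)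


lemma gaussianPDFReal_std (x : ℝ) :
    gaussianPDFReal 0 1 x = (Real.sqrt (2 * π))⁻¹ * rexp (-x ^ 2 / 2) := by
  simp [gaussianPDFReal]

lemma stdGaussian_eq : gaussianReal 0 1 =
    (volume : Measure ℝ).withDensity (fun x => ((gaussianPDFReal 0 1 x).toNNReal : ℝ≥0∞)) := by
  rw [gaussianReal_of_var_ne_zero _ one_ne_zero]
  rfl

lemma integral_std (g : ℝ → ℝ) :
    ∫ x, g x ∂gaussianReal 0 1 = ∫ x, gaussianPDFReal 0 1 x * g x := by
  rw [stdGaussian_eq, integral_withDensity_eq_integral_smul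
    (measurable_gaussianPDFReal 0 1).real_toNNReal]
  congr 1 with x
  rw [NNReal.smul_def, Real.coe_toNNReal _ (gaussianPDFReal_nonneg 0 1 x), smul_eq_mul]

lemma integrable_std_iff {g : ℝ → ℝ} :
    Integrable g (gaussianReal 0 1) ↔
      Integrable (fun x => gaussianPDFReal 0 1 x * g x) volume := by
  rw [stdGaussian_eq, integrable_withDensity_iff_integrable_smul
    (measurable_gaussianPDFReal 0 1).real_toNNReal]
  refine integrable_congr (Filter.Eventually.of_forall fun x => ?_)
  show (gaussianPDFReal 0 1 x).toNNReal • g x = _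
  rw [NNReal.smul_def, Real.coe_toNNReal _ (gaussianPDFReal_nonneg 0 1 x), smul_eq_mul]

lemma integrable_exp_sq_gaussian {c : ℝ} (hc : c < 1/2) :
    Integrable (fun x => rexp (c * x ^ 2)) (gaussianReal 0 1) := by
  rw [integrable_std_iff]
  have h1 : ∀ x : ℝ, gaussianPDFReal 0 1 x * rexp (c * x ^ 2)
      = (Real.sqrt (2 * π))⁻¹ * rexp (-(1/2 - c) * x ^ 2) := by
    intro x
    rw [gaussianPDFReal_std, mul_assoc, ← Real.exp_add]
    ring_nf
  simp_rw [h1]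
  exact (integrable_exp_neg_mul_sq (by linarith)).const_mul _

lemma integral_exp_sq_gaussian {c : ℝ} (hc : c < 1/2) :
    ∫ x, rexp (c * x ^ 2) ∂gaussianReal 0 1 = (Real.sqrt (1 - 2 * c))⁻¹ := by
  rw [integral_std]
  have h1 : ∀ x : ℝ, gaussianPDFReal 0 1 x * rexp (c * x ^ 2)
      = (Real.sqrt (2 * π))⁻¹ * rexp (-(1/2 - c) * x ^ 2) := by
    intro x
    rw [gaussianPDFReal_std, mul_assoc, ← Real.exp_add]
    ring_nf
  simp_rw [h1]
  rw [integral_const_mul, integral_gaussian]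
  have hc' : (0:ℝ) < 1 - 2 * c := by linarith
  have h2 : π / (1/2 - c) = 2 * π / (1 - 2 * c) := by
    rw [div_eq_div_iff (by linarith) (ne_of_gt hc')]; ring
  rw [h2, Real.sqrt_div (by positivity)]
  have h3 : (0:ℝ) < Real.sqrt (2 * π) := Real.sqrt_pos.2 (by positivity)
  field_simp


/-- Standard Gaussian probability measure on `ℝ^n`. -/
def gaussianPi (n : ℕ) : Measure (Fin n → ℝ) :=
  Measure.pi fun _ => gaussianReal 0 1

instance (n : ℕ) : IsProbabilityMeasure (gaussianPi n) := by
  unfold gaussianPi; infer_instance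

lemma gaussianPi_integrable_prod {n : ℕ} (f : Fin n → ℝ → ℝ)
    (hf : ∀ i, Integrable (f i) (gaussianReal 0 1)) :
    Integrable (fun x => ∏ i, f i (x i)) (gaussianPi n) := by
  letI : MeasureSpace ℝ := ⟨gaussianReal 0 1⟩
  haveI : SigmaFinite (volume : Measure ℝ) :=
    (inferInstance : SigmaFinite (gaussianReal 0 1))
  exact Integrable.fintype_prod (E := ℝ) (f := f) hf

lemma gaussianPi_integral_prod {n : ℕ} (f : Fin n → ℝ → ℝ) :
    ∫ x, ∏ i, f i (x i) ∂gaussianPi n = ∏ i, ∫ x, f i x ∂gaussianReal 0 1 := by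
  letI : MeasureSpace ℝ := ⟨gaussianReal 0 1⟩
  haveI : SigmaFinite (volume : Measure ℝ) :=
    (inferInstance : SigmaFinite (gaussianReal 0 1))
  exact integral_fintype_prod_eq_prod (fun _ => f _)

lemma integrable_id_gaussian : Integrable (fun x : ℝ => x) (gaussianReal 0 1) := by
  have h := integrable_exp_sq_gaussian (c := 1/8) (by norm_num)
  refine (h.const_mul 4).mono' ?_ (Filter.Eventually.of_forall fun x => ?_)
  · exact (measurable_id).aestronglyMeasurable
  · simpa [norm_eq_abs, mul_comm, div_eq_mul_inv] using abs_le_exp_sq x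


lemma gaussianPi_eq_withDensity (n : ℕ) :
    gaussianPi n = (volume : Measure (Fin n → ℝ)).withDensity
      (fun x => ∏ i, ENNReal.ofReal (gaussianPDFReal 0 1 (x i))) := by
  refine Measure.pi_eq fun s hs => ?_
  rw [withDensity_apply _ (MeasurableSet.univ_pi hs)]
  have key : ∀ x : Fin n → ℝ, (Set.univ.pi s).indicator
      (fun x => ∏ i, ENNReal.ofReal (gaussianPDFReal 0 1 (x i))) x
      = ∏ i, ENNReal.ofReal ((s i).indicator (gaussianPDFReal 0 1) (x i)) := by
    intro x
    by_cases hx : x ∈ Set.univ.pi s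
    · rw [Set.indicator_of_mem hx]
      refine Finset.prod_congr rfl fun i _ => ?_
      rw [Set.indicator_of_mem (hx i (Set.mem_univ i))]
    · rw [Set.indicator_of_notMem hx]
      rw [Set.mem_pi] at hx
      push_neg at hx
      obtain ⟨i, _, hi⟩ := hx
      rw [eq_comm, Finset.prod_eq_zero (Finset.mem_univ i)]
      rw [Set.indicator_of_notMem hi, ENNReal.ofReal_zero]
  rw [← lintegral_indicator (MeasurableSet.univ_pi hs)]
  rw [lintegral_congr key]
  have hint : ∀ i : Fin n, Integrable ((s i).indicator (gaussianPDFReal 0 1)) volume :=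
    fun i => (integrable_gaussianPDFReal 0 1).indicator (hs i)
  have hnn : ∀ (i : Fin n) (x : ℝ), 0 ≤ (s i).indicator (gaussianPDFReal 0 1) x :=
    fun i x => Set.indicator_nonneg (fun y _ => gaussianPDFReal_nonneg 0 1 y) x
  calc ∫⁻ x : Fin n → ℝ, ∏ i, ENNReal.ofReal ((s i).indicator (gaussianPDFReal 0 1) (x i))
      = ∫⁻ x : Fin n → ℝ, ENNReal.ofReal (∏ i, (s i).indicator (gaussianPDFReal 0 1) (x i)) := by
        simp_rw [ENNReal.ofReal_prod_of_nonneg (fun i _ => hnn i _)]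
    _ = ENNReal.ofReal (∫ x : Fin n → ℝ, ∏ i, (s i).indicator (gaussianPDFReal 0 1) (x i)) := by
        rw [ofReal_integral_eq_lintegral_ofReal]
        · exact Integrable.fintype_prod (fun i => hint i)
        · exact Filter.Eventually.of_forall fun x => Finset.prod_nonneg fun i _ => hnn i _
    _ = ENNReal.ofReal (∏ i, ∫ x : ℝ, (s i).indicator (gaussianPDFReal 0 1) x) := by
        rw [volume_pi, integral_fintype_prod_eq_prod]
    _ = ∏ i, ENNReal.ofReal (∫ x : ℝ, (s i).indicator (gaussianPDFReal 0 1) x) := by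
        rw [ENNReal.ofReal_prod_of_nonneg fun i _ => integral_nonneg (hnn i)]
    _ = ∏ i, gaussianReal 0 1 (s i) := by
        refine Finset.prod_congr rfl fun i _ => ?_
        rw [ofReal_integral_eq_lintegral_ofReal (hint i)
          (Filter.Eventually.of_forall (hnn i))]
        rw [gaussianReal_apply 0 one_ne_zero (s i), ← lintegral_indicator (hs i)]
        congr 1 with x
        by_cases hx : x ∈ s i
        · simp [Set.indicator_of_mem hx, gaussianPDF]
        · simp [Set.indicator_of_notMem hx]

lemma measurable_mulVec {n : ℕ} (O : Matrix (Fin n) (Fin n) ℝ) :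
    Measurable (fun x : Fin n → ℝ => O.mulVec x) := by
  have : (fun x : Fin n → ℝ => O.mulVec x) = ⇑(Matrix.toLin' O) := by
    ext x i; rw [Matrix.toLin'_apply]
  rw [this]
  exact (Matrix.toLin' O).continuous_of_finiteDimensional.measurable

lemma sum_sq_mulVec {n : ℕ} {O : Matrix (Fin n) (Fin n) ℝ} (hO : Oᵀ * O = 1)
    (x : Fin n → ℝ) : ∑ i, (O.mulVec x i) ^ 2 = ∑ i, (x i) ^ 2 := by
  have h1 : ∀ y : Fin n → ℝ, ∑ i, (y i) ^ 2 = dotProduct y y := by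
    intro y; simp [dotProduct, pow_two]
  rw [h1, h1, Matrix.dotProduct_mulVec]
  have h2 : Matrix.vecMul (O.mulVec x) O = x := by
    rw [← Matrix.mulVec_transpose, Matrix.mulVec_mulVec, hO, Matrix.one_mulVec]
  rw [h2]

lemma gaussianPi_density_rot {n : ℕ} {O : Matrix (Fin n) (Fin n) ℝ} (hO : Oᵀ * O = 1)
    (x : Fin n → ℝ) :
    ∏ i, ENNReal.ofReal (gaussianPDFReal 0 1 (O.mulVec x i))
      = ∏ i, ENNReal.ofReal (gaussianPDFReal 0 1 (x i)) := by
  have key : ∀ y : Fin n → ℝ, ∏ i, ENNReal.ofReal (gaussianPDFReal 0 1 (y i))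
      = ENNReal.ofReal ((Real.sqrt (2 * π))⁻¹ ^ n * rexp (-(∑ i, (y i) ^ 2) / 2)) := by
    intro y
    rw [← ENNReal.ofReal_prod_of_nonneg (fun i _ => gaussianPDFReal_nonneg 0 1 (y i))]
    congr 1
    simp_rw [gaussianPDFReal_std, Finset.prod_mul_distrib, Finset.prod_const, Finset.card_univ,
      Fintype.card_fin, ← Real.exp_sum]
    congr 1
    rw [← Finset.sum_div, ← Finset.sum_neg_distrib]
  rw [key, key, sum_sq_mulVec hO]

lemma gaussianPi_map_mulVec {n : ℕ} {O : Matrix (Fin n) (Fin n) ℝ} (hO : Oᵀ * O = 1) :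
    MeasurePreserving (fun x : Fin n → ℝ => O.mulVec x) (gaussianPi n) (gaussianPi n) := by
  have hdet : O.det ≠ 0 := by
    intro h
    have := congrArg Matrix.det hO
    rw [Matrix.det_mul, Matrix.det_transpose, Matrix.det_one, h, mul_zero] at this
    exact zero_ne_one this
  have habs : |O.det⁻¹| = 1 := by
    have hdd : O.det * O.det = 1 := by
      have := congrArg Matrix.det hO
      rwa [Matrix.det_mul, Matrix.det_transpose, Matrix.det_one] at this
    have h1 : |O.det| * |O.det| = 1 := by rw [abs_mul_abs_self]; exact hdd
    have h2 : |O.det| = 1 := by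
      rcases mul_self_eq_one_iff.mp h1 with h | h
      · exact h
      · exfalso; nlinarith [abs_nonneg O.det]
    rw [abs_inv, h2]; norm_num
  have hvol : Measure.map (fun x : Fin n → ℝ => O.mulVec x) volume = volume := by
    have : (fun x : Fin n → ℝ => O.mulVec x) = ⇑(Matrix.toLin' O) := by
      ext x i; rw [Matrix.toLin'_apply]
    rw [this, Real.map_matrix_volume_pi_eq_smul_volume_pi hdet, habs]
    simp
  refine ⟨measurable_mulVec O, ?_⟩
  refine Measure.ext fun s hs => ?_
  rw [Measure.map_apply (measurable_mulVec O) hs, gaussianPi_eq_withDensity,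
    withDensity_apply _ (hs.preimage (measurable_mulVec O)), withDensity_apply _ hs,
    ← lintegral_indicator (hs.preimage (measurable_mulVec O)), ← lintegral_indicator hs]
  have hmeas : Measurable (fun x : Fin n → ℝ => ∏ i, ENNReal.ofReal (gaussianPDFReal 0 1 (x i))) :=
    Finset.measurable_prod _ fun i _ =>
      ((measurable_gaussianPDFReal 0 1).comp (measurable_pi_apply i)).ennreal_ofReal
  have key : ∀ x : Fin n → ℝ,
      ((fun x : Fin n → ℝ => O.mulVec x) ⁻¹' s).indicator
        (fun x => ∏ i, ENNReal.ofReal (gaussianPDFReal 0 1 (x i))) x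
      = s.indicator (fun x => ∏ i, ENNReal.ofReal (gaussianPDFReal 0 1 (x i))) (O.mulVec x) := by
    intro x
    by_cases hx : O.mulVec x ∈ s
    · rw [Set.indicator_of_mem hx, Set.indicator_of_mem (by exact hx),
        gaussianPi_density_rot hO]
    · rw [Set.indicator_of_notMem hx, Set.indicator_of_notMem (by exact hx)]
  rw [lintegral_congr key, ← lintegral_map (hmeas.indicator hs) (measurable_mulVec O), hvol]



variable {n : ℕ} {M : Matrix (Fin n) (Fin n) ℝ} (hM : M.IsHermitian)

lemma star_unitary_orth :
    ((star (hM.eigenvectorUnitary : Matrix (Fin n) (Fin n) ℝ))ᵀ) *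
      (star (hM.eigenvectorUnitary : Matrix (Fin n) (Fin n) ℝ)) = 1 := by
  have h1 : (star (hM.eigenvectorUnitary : Matrix (Fin n) (Fin n) ℝ))ᵀ
      = (hM.eigenvectorUnitary : Matrix (Fin n) (Fin n) ℝ) := by
    rw [Matrix.star_eq_conjTranspose, Matrix.conjTranspose_eq_transpose_of_trivial,
      Matrix.transpose_transpose]
  rw [h1]
  exact Matrix.mem_unitaryGroup_iff.mp hM.eigenvectorUnitary.2

lemma quad_diag (x : Fin n → ℝ) :
    x ⬝ᵥ (M *ᵥ x) = ∑ k, hM.eigenvalues k *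
      ((star (hM.eigenvectorUnitary : Matrix (Fin n) (Fin n) ℝ) *ᵥ x) k) ^ 2 := by
  set U := (hM.eigenvectorUnitary : Matrix (Fin n) (Fin n) ℝ)
  set d : Fin n → ℝ := hM.eigenvalues
  have hsp : M = U * Matrix.diagonal d * star U := by
    have := hM.spectral_theorem
    simpa using this
  conv_lhs => rw [hsp]
  rw [← Matrix.mulVec_mulVec, ← Matrix.mulVec_mulVec, Matrix.dotProduct_mulVec]
  have h2 : Matrix.vecMul x U = star U *ᵥ x := by
    rw [Matrix.star_eq_conjTranspose, Matrix.conjTranspose_eq_transpose_of_trivial,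
      Matrix.mulVec_transpose]
  rw [h2]
  set y := star U *ᵥ x
  simp [Matrix.mulVec_diagonal, dotProduct]
  exact Finset.sum_congr rfl fun k _ => by ring

lemma eig_sum : ∑ k, hM.eigenvalues k = M.trace := by
  set U := (hM.eigenvectorUnitary : Matrix (Fin n) (Fin n) ℝ)
  set d : Fin n → ℝ := hM.eigenvalues
  have hsp : M = U * Matrix.diagonal d * star U := by simpa using hM.spectral_theorem
  conv_rhs => rw [hsp]
  rw [Matrix.trace_mul_cycle,
    Matrix.mem_unitaryGroup_iff'.mp hM.eigenvectorUnitary.2, Matrix.one_mul,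
    Matrix.trace_diagonal]

lemma eig_sq_sum : ∑ k, (hM.eigenvalues k) ^ 2 = (M * M).trace := by
  set U := (hM.eigenvectorUnitary : Matrix (Fin n) (Fin n) ℝ)
  set d : Fin n → ℝ := hM.eigenvalues
  have hsp : M = U * Matrix.diagonal d * star U := by simpa using hM.spectral_theorem
  have h1 : M * M = U * (Matrix.diagonal d * Matrix.diagonal d) * star U := by
    rw [hsp]
    have hU : star U * U = 1 := Matrix.mem_unitaryGroup_iff'.mp hM.eigenvectorUnitary.2
    calc U * Matrix.diagonal d * star U * (U * Matrix.diagonal d * star U)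
        = U * Matrix.diagonal d * (star U * U) * Matrix.diagonal d * star U := by
          simp only [Matrix.mul_assoc]
      _ = U * (Matrix.diagonal d * Matrix.diagonal d) * star U := by
          rw [hU]; simp only [Matrix.mul_assoc, Matrix.one_mul]
  rw [h1, Matrix.trace_mul_cycle,
    Matrix.mem_unitaryGroup_iff'.mp hM.eigenvectorUnitary.2, Matrix.one_mul,
    Matrix.diagonal_mul_diagonal, Matrix.trace_diagonal]
  exact Finset.sum_congr rfl fun k _ => sq (d k)


variable {n : ℕ}

def pairMatrix (c : Fin n → Fin n → ℝ) : Matrix (Fin n) (Fin n) ℝ :=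
  Matrix.of fun i j => if i < j then c i j / 2 else if j < i then c j i / 2 else 0

lemma pairMatrix_apply (c : Fin n → Fin n → ℝ) (i j : Fin n) :
    pairMatrix c i j = if i < j then c i j / 2 else if j < i then c j i / 2 else 0 := rfl

lemma pairMatrix_isHermitian (c : Fin n → Fin n → ℝ) : (pairMatrix c).IsHermitian := by
  rw [Matrix.IsHermitian, Matrix.conjTranspose_eq_transpose_of_trivial]
  ext i j
  rw [Matrix.transpose_apply, pairMatrix_apply, pairMatrix_apply]
  rcases lt_trichotomy i j with h | h | h
  · simp [h, not_lt_of_gt h]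
  · simp [h, lt_irrefl]
  · simp [h, not_lt_of_gt h]

lemma sum_pairs_split (F : Fin n × Fin n → ℝ) (hdiag : ∀ i, F (i, i) = 0) :
    ∑ q : Fin n × Fin n, F q
      = ∑ q ∈ Finset.univ.filter (fun q : Fin n × Fin n => q.1 < q.2), F q
        + ∑ q ∈ Finset.univ.filter (fun q : Fin n × Fin n => q.1 < q.2), F q.swap := by
  classical
  rw [← Finset.sum_filter_add_sum_filter_not Finset.univ (fun q : Fin n × Fin n => q.1 < q.2)]
  congr 1
  rw [show Finset.univ.filter (fun q : Fin n × Fin n => ¬ q.1 < q.2)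
      = (Finset.univ.filter (fun q : Fin n × Fin n => q.2 < q.1))
        ∪ (Finset.univ.filter (fun q : Fin n × Fin n => q.1 = q.2)) by
    ext q
    simp only [Finset.mem_filter, Finset.mem_union, Finset.mem_univ, true_and]
    constructor
    · intro h; rcases lt_trichotomy q.1 q.2 with h' | h' | h'
      · exact absurd h' h
      · exact Or.inr h'
      · exact Or.inl h'
    · rintro (h | h)
      · exact not_lt_of_gt h
      · exact h ▸ lt_irrefl _]
  rw [Finset.sum_union (by
    rw [Finset.disjoint_filter]
    intro q _ h h'
    exact absurd (h' ▸ h) (lt_irrefl _))]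
  have h0 : ∑ q ∈ Finset.univ.filter (fun q : Fin n × Fin n => q.1 = q.2), F q = 0 := by
    refine Finset.sum_eq_zero fun q hq => ?_
    rw [Finset.mem_filter] at hq
    have : q = (q.1, q.1) := by rw [Prod.ext_iff]; exact ⟨rfl, hq.2.symm⟩
    rw [this]; exact hdiag q.1
  rw [h0, add_zero]
  refine Finset.sum_nbij' (fun q => q.swap) (fun q => q.swap) ?_ ?_ ?_ ?_ ?_
  · intro q hq; simp only [Finset.mem_filter, Finset.mem_univ, true_and] at hq ⊢; exact hq
  · intro q hq; simp only [Finset.mem_filter, Finset.mem_univ, true_and] at hq ⊢; exact hq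
  · intro q _; exact Prod.swap_swap q
  · intro q _; exact Prod.swap_swap q
  · intro q _; rfl

lemma pairMatrix_quad (c : Fin n → Fin n → ℝ) (x : Fin n → ℝ) :
    x ⬝ᵥ (pairMatrix c *ᵥ x)
      = ∑ q ∈ Finset.univ.filter (fun q : Fin n × Fin n => q.1 < q.2),
          c q.1 q.2 * (x q.1 * x q.2) := by
  classical
  have h1 : x ⬝ᵥ (pairMatrix c *ᵥ x)
      = ∑ q : Fin n × Fin n, x q.1 * (pairMatrix c q.1 q.2 * x q.2) := by
    rw [dotProduct, ← Finset.univ_product_univ, Finset.sum_product]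
    refine Finset.sum_congr rfl fun i _ => ?_
    rw [Matrix.mulVec, dotProduct, Finset.mul_sum]
  rw [h1, sum_pairs_split _ (fun i => by simp [pairMatrix_apply, lt_irrefl])]
  rw [← Finset.sum_add_distrib]
  refine Finset.sum_congr rfl fun q hq => ?_
  rw [Finset.mem_filter] at hq
  have h : q.1 < q.2 := hq.2
  simp only [Prod.fst_swap, Prod.snd_swap, pairMatrix_apply, if_pos h, if_neg (not_lt_of_gt h)]
  ring

lemma pairMatrix_trace (c : Fin n → Fin n → ℝ) : (pairMatrix c).trace = 0 := by
  rw [Matrix.trace]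
  refine Finset.sum_eq_zero fun i _ => ?_
  simp [Matrix.diag, pairMatrix_apply, lt_irrefl]

lemma pairMatrix_sq_trace (c : Fin n → Fin n → ℝ) :
    (pairMatrix c * pairMatrix c).trace
      = (∑ q ∈ Finset.univ.filter (fun q : Fin n × Fin n => q.1 < q.2),
          (c q.1 q.2) ^ 2) / 2 := by
  classical
  have h1 : (pairMatrix c * pairMatrix c).trace
      = ∑ q : Fin n × Fin n, pairMatrix c q.1 q.2 * pairMatrix c q.2 q.1 := by
    rw [Matrix.trace, ← Finset.univ_product_univ, Finset.sum_product]
    refine Finset.sum_congr rfl fun i _ => ?_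
    rw [Matrix.diag, Matrix.mul_apply]
  rw [h1, sum_pairs_split _ (fun i => by simp [pairMatrix_apply, lt_irrefl])]
  rw [← Finset.sum_add_distrib, Finset.sum_div]
  refine Finset.sum_congr rfl fun q hq => ?_
  rw [Finset.mem_filter] at hq
  have h : q.1 < q.2 := hq.2
  simp only [Prod.fst_swap, Prod.snd_swap, pairMatrix_apply, if_pos h, if_neg (not_lt_of_gt h)]
  ring

lemma integrable_coord_mul {n : ℕ} {i j : Fin n} (hij : i ≠ j) :
    Integrable (fun x : Fin n → ℝ => x i * x j) (gaussianPi n) := by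
  classical
  set f : Fin n → ℝ → ℝ := fun k => if k = i ∨ k = j then (fun u => u) else (fun _ => 1) with hf
  have key : (fun x : Fin n → ℝ => x i * x j) = (fun x => ∏ k, f k (x k)) := by
    funext x
    rw [← Finset.mul_prod_erase Finset.univ (fun k => f k (x k)) (Finset.mem_univ i),
      ← Finset.mul_prod_erase (Finset.univ.erase i) (fun k => f k (x k))
        (Finset.mem_erase.mpr ⟨hij.symm, Finset.mem_univ j⟩)]
    have h1 : f i (x i) = x i := by simp [hf]
    have h2 : f j (x j) = x j := by simp [hf]
    have h3 : ∀ k ∈ (Finset.univ.erase i).erase j, f k (x k) = 1 := by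
      intro k hk
      rw [Finset.mem_erase, Finset.mem_erase] at hk
      simp [hf, hk.1, hk.2.1]
    rw [h1, h2, Finset.prod_congr rfl h3, Finset.prod_const_one, mul_one]
  rw [key]
  refine gaussianPi_integrable_prod f fun k => ?_
  by_cases hk : k = i ∨ k = j
  · simpa [hf, hk] using integrable_id_gaussian
  · simpa [hf, hk] using (integrable_const (1:ℝ))

lemma integrable_exp_sum_sq {n : ℕ} {a : Fin n → ℝ} (ha : ∀ k, a k < 1/2) :
    Integrable (fun y : Fin n → ℝ => rexp (∑ k, a k * (y k) ^ 2)) (gaussianPi n) := by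
  simp_rw [Real.exp_sum]
  exact gaussianPi_integrable_prod _ fun k => integrable_exp_sq_gaussian (ha k)

lemma integral_exp_sum_sq {n : ℕ} {a : Fin n → ℝ} (ha : ∀ k, |a k| ≤ 1/4) :
    ∫ y, rexp (∑ k, a k * (y k) ^ 2) ∂gaussianPi n
      ≤ rexp (∑ k, a k + 2 * ∑ k, (a k) ^ 2) := by
  have ha' : ∀ k, a k < 1/2 := fun k =>
    lt_of_le_of_lt ((le_abs_self _).trans (ha k)) (by norm_num)
  calc ∫ y, rexp (∑ k, a k * (y k) ^ 2) ∂gaussianPi n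
      = ∏ k, ∫ u, rexp (a k * u ^ 2) ∂gaussianReal 0 1 := by
        simp_rw [Real.exp_sum]
        exact gaussianPi_integral_prod (fun k u => rexp (a k * u ^ 2))
    _ = ∏ k, (Real.sqrt (1 - 2 * a k))⁻¹ :=
        Finset.prod_congr rfl fun k _ => integral_exp_sq_gaussian (ha' k)
    _ ≤ ∏ k, rexp ((2 * a k + (2 * a k) ^ 2) / 2) := by
        refine Finset.prod_le_prod (fun k _ => inv_nonneg.2 (Real.sqrt_nonneg _))
          (fun k _ => ?_)
        have h2 : |2 * a k| ≤ 1/2 := by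
          rw [abs_mul, abs_two]
          linarith [ha k]
        have := inv_sqrt_one_sub_le_exp h2
        convert this using 3 <;> ring
    _ = rexp (∑ k, (2 * a k + (2 * a k) ^ 2) / 2) := by rw [← Real.exp_sum]
    _ = rexp (∑ k, a k + 2 * ∑ k, (a k) ^ 2) := by
        congr 1
        rw [Finset.mul_sum, ← Finset.sum_add_distrib]
        exact Finset.sum_congr rfl fun k _ => by ring

set_option maxHeartbeats 1000000 in
/-- **Gaussian level-two inequality.** If `A ⊆ ℝ^n` is measurable with
Gaussian measure `μ = γ_n(A) > 0`, then
`∑_{i<j} (∫_A xᵢxⱼ dγ_n)² ≤ 2e²·μ²·(ln(e/μ))²`. -/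
theorem gaussian_level_two_inequality (n : ℕ) (A : Set (Fin n → ℝ))
    (hA : MeasurableSet A) (hpos : 0 < (gaussianPi n A).toReal) :
    ∑ q ∈ Finset.univ.filter (fun q : Fin n × Fin n => q.1 < q.2),
        (∫ x in A, x q.1 * x q.2 ∂gaussianPi n) ^ 2
      ≤ 2 * Real.exp 1 ^ 2 * (gaussianPi n A).toReal ^ 2 *
        Real.log (Real.exp 1 / (gaussianPi n A).toReal) ^ 2 := by
  classical
  set μr := (gaussianPi n A).toReal with hμdef
  have hμ1 : μr ≤ 1 := by
    rw [hμdef]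
    calc (gaussianPi n A).toReal ≤ (1 : ℝ≥0∞).toReal :=
          ENNReal.toReal_mono (by norm_num) prob_le_one
      _ = 1 := ENNReal.toReal_one
  set c : Fin n → Fin n → ℝ := fun i j => ∫ x in A, x i * x j ∂gaussianPi n with hcdef
  have hgoal : ∀ q : Fin n × Fin n,
      (∫ x in A, x q.1 * x q.2 ∂gaussianPi n) = c q.1 q.2 := fun q => rfl
  simp_rw [hgoal]
  set S := ∑ q ∈ Finset.univ.filter (fun q : Fin n × Fin n => q.1 < q.2),
    (c q.1 q.2) ^ 2 with hSdef
  -- the log identity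
  have hL : Real.log (Real.exp 1 / μr) = 1 + Real.log μr⁻¹ := by
    rw [Real.log_div (Real.exp_ne_zero 1) (ne_of_gt hpos), Real.log_exp, Real.log_inv]
    ring
  set x0 := Real.log μr⁻¹ with hx0def
  have hx0 : 0 ≤ x0 := Real.log_nonneg (one_le_inv_iff₀.mpr ⟨hpos, hμ1⟩)
  have hS_nonneg : 0 ≤ S := Finset.sum_nonneg fun q _ => sq_nonneg _
  rcases eq_or_lt_of_le hS_nonneg with hS0 | hSpos
  · rw [← hS0]; positivity
  -- main case
  set M := pairMatrix c with hMdef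
  have hM : M.IsHermitian := pairMatrix_isHermitian c
  set W : (Fin n → ℝ) → ℝ := fun x => x ⬝ᵥ (M *ᵥ x) with hWdef
  have hWsum : ∀ x, W x = ∑ q ∈ Finset.univ.filter (fun q : Fin n × Fin n => q.1 < q.2),
      c q.1 q.2 * (x q.1 * x q.2) := fun x => pairMatrix_quad c x
  have htr : ∑ k, hM.eigenvalues k = 0 := by
    rw [eig_sum hM]; exact pairMatrix_trace c
  have htr2 : ∑ k, (hM.eigenvalues k) ^ 2 = S / 2 := by
    rw [eig_sq_sum hM]; exact pairMatrix_sq_trace c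
  set σ := Real.sqrt S with hσdef
  have hσ : 0 < σ := Real.sqrt_pos.mpr hSpos
  have hσ2 : σ ^ 2 = S := Real.sq_sqrt hS_nonneg
  have hrt2 : Real.sqrt 2 * Real.sqrt 2 = 2 := Real.mul_self_sqrt (by norm_num)
  have hrt2pos : 0 < Real.sqrt 2 := Real.sqrt_pos.mpr (by norm_num)
  set t := (2 * Real.sqrt 2 * σ)⁻¹ with htdef
  have ht : 0 < t := by positivity
  set a : Fin n → ℝ := fun k => t * hM.eigenvalues k with hadef
  have hlam : ∀ k, (hM.eigenvalues k) ^ 2 ≤ S / 2 := by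
    intro k
    rw [← htr2]
    exact Finset.single_le_sum (f := fun k => (hM.eigenvalues k) ^ 2)
      (fun k _ => sq_nonneg _) (Finset.mem_univ k)
  have ha : ∀ k, |a k| ≤ 1/4 := by
    intro k
    have h1 : |hM.eigenvalues k| ≤ σ / Real.sqrt 2 := by
      rw [← Real.sqrt_sq_eq_abs, hσdef, ← Real.sqrt_div hS_nonneg]
      exact Real.sqrt_le_sqrt (hlam k)
    have h2 : t * (σ / Real.sqrt 2) = 1/4 := by
      rw [htdef]
      field_simp
      nlinarith [hrt2, hσ]
    calc |a k| = t * |hM.eigenvalues k| := by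
          rw [hadef, abs_mul, abs_of_pos ht]
      _ ≤ t * (σ / Real.sqrt 2) := by
          exact mul_le_mul_of_nonneg_left h1 ht.le
      _ = 1/4 := h2
  have hsum_a : ∑ k, a k = 0 := by
    rw [hadef, ← Finset.mul_sum, htr, mul_zero]
  have hsum_a2 : ∑ k, (a k) ^ 2 = 1/16 := by
    have h8 : t ^ 2 = (8 * S)⁻¹ := by
      rw [htdef, inv_pow]
      congr 1
      rw [mul_pow, mul_pow]
      rw [show (Real.sqrt 2) ^ 2 = 2 by rw [sq]; exact hrt2, hσ2]
      ring
    simp_rw [hadef, mul_pow]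
    rw [← Finset.mul_sum, htr2, h8]
    field_simp
    ring
  -- MGF bound
  set V := star (hM.eigenvectorUnitary : Matrix (Fin n) (Fin n) ℝ) with hVdef
  have hVorth : Vᵀ * V = 1 := star_unitary_orth hM
  have hmp : MeasurePreserving (fun x : Fin n → ℝ => V *ᵥ x) (gaussianPi n) (gaussianPi n) :=
    gaussianPi_map_mulVec hVorth
  have hdiagt : ∀ x, t * W x = ∑ k, a k * ((V *ᵥ x) k) ^ 2 := by
    intro x
    rw [hWdef]
    show t * (x ⬝ᵥ (M *ᵥ x)) = _
    rw [quad_diag hM x, Finset.mul_sum]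
    exact Finset.sum_congr rfl fun k _ => by rw [hadef]; ring
  set g : (Fin n → ℝ) → ℝ := fun y => rexp (∑ k, a k * (y k) ^ 2) with hgdef
  have hg_cont : Continuous g := by
    apply Real.continuous_exp.comp
    exact continuous_finset_sum _ fun k _ => continuous_const.mul ((continuous_apply k).pow 2)
  have ha' : ∀ k, a k < 1/2 := fun k =>
    lt_of_le_of_lt ((le_abs_self _).trans (ha k)) (by norm_num)
  have hgint : Integrable g (gaussianPi n) := integrable_exp_sum_sq ha'
  have hexp_eq : (fun x : Fin n → ℝ => rexp (t * W x)) = fun x => g (V *ᵥ x) := by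
    funext x
    rw [hgdef, hdiagt x]
  have hEint : Integrable (fun x => rexp (t * W x)) (gaussianPi n) := by
    rw [hexp_eq]
    have h1 : Integrable g (Measure.map (fun x : Fin n → ℝ => V *ᵥ x) (gaussianPi n)) := by
      rw [hmp.map_eq]; exact hgint
    exact (integrable_map_measure hg_cont.aestronglyMeasurable
      (measurable_mulVec V).aemeasurable).mp h1
  have hE : ∫ x, rexp (t * W x) ∂gaussianPi n ≤ rexp (1/8) := by
    have h1 : ∫ x, rexp (t * W x) ∂gaussianPi n = ∫ y, g y ∂gaussianPi n := by
      rw [hexp_eq]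
      conv_rhs => rw [← hmp.map_eq]
      rw [integral_map (measurable_mulVec V).aemeasurable
        (by rw [hmp.map_eq]; exact hg_cont.aestronglyMeasurable)]
    rw [h1, hgdef]
    calc ∫ y, rexp (∑ k, a k * (y k) ^ 2) ∂gaussianPi n
        ≤ rexp (∑ k, a k + 2 * ∑ k, (a k) ^ 2) := integral_exp_sum_sq ha
      _ = rexp (1/8) := by rw [hsum_a, hsum_a2]; norm_num
  -- integral of W over A equals S
  have hWint : Integrable W (gaussianPi n) := by
    have h1 : W = fun x => ∑ q ∈ Finset.univ.filter
        (fun q : Fin n × Fin n => q.1 < q.2), c q.1 q.2 * (x q.1 * x q.2) := funext hWsum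
    rw [h1]
    refine integrable_finset_sum _ fun q hq => ?_
    have hne : q.1 ≠ q.2 := ne_of_lt (Finset.mem_filter.mp hq).2
    exact (integrable_coord_mul hne).const_mul _
  have hSW : ∫ x in A, W x ∂gaussianPi n = S := by
    rw [show (fun x => W x) = fun x => ∑ q ∈ Finset.univ.filter
        (fun q : Fin n × Fin n => q.1 < q.2), c q.1 q.2 * (x q.1 * x q.2) from funext hWsum]
    rw [integral_finset_sum _ fun q hq => ?_]
    · rw [hSdef]
      refine Finset.sum_congr rfl fun q hq => ?_
      rw [integral_const_mul]
      rw [show (∫ x in A, x q.1 * x q.2 ∂gaussianPi n) = c q.1 q.2 from rfl, sq]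
    · have hne : q.1 ≠ q.2 := ne_of_lt (Finset.mem_filter.mp hq).2
      exact ((integrable_coord_mul hne).const_mul _).integrableOn
  -- core chain
  set s := σ * (2 * Real.sqrt 2) * (x0 + 1/8) with hsdef
  have hts : t * s = x0 + 1/8 := by
    rw [htdef, hsdef]
    field_simp
  have hexp_int : Integrable (fun x => rexp (t * W x - t * s)) (gaussianPi n) := by
    simp_rw [sub_eq_add_neg, Real.exp_add]
    exact hEint.mul_const _
  have hpoint : ∀ x ∈ A, W x ≤ s + rexp (t * W x - t * s) / t := by
    intro x _
    have h2 : t * W x - t * s ≤ rexp (t * W x - t * s) := by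
      linarith [Real.add_one_le_exp (t * W x - t * s)]
    have h3 : W x - s ≤ rexp (t * W x - t * s) / t := by
      rw [le_div_iff₀ ht]
      calc (W x - s) * t = t * W x - t * s := by ring
        _ ≤ rexp (t * W x - t * s) := h2
    linarith
  have hchain1 : ∫ x in A, W x ∂gaussianPi n
      ≤ ∫ x in A, (s + rexp (t * W x - t * s) / t) ∂gaussianPi n := by
    refine setIntegral_mono_on hWint.integrableOn
      ((integrable_const s).add (hexp_int.div_const t)).integrableOn hA hpoint
  have hchain2 : ∫ x in A, (s + rexp (t * W x - t * s) / t) ∂gaussianPi n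
      = s * μr + (∫ x in A, rexp (t * W x - t * s) ∂gaussianPi n) / t := by
    rw [integral_add (integrable_const s).integrableOn (hexp_int.div_const t).integrableOn]
    rw [setIntegral_const, integral_div]
    rw [hμdef, smul_eq_mul, mul_comm]
    rfl
  have hchain3 : ∫ x in A, rexp (t * W x - t * s) ∂gaussianPi n
      ≤ ∫ x, rexp (t * W x - t * s) ∂gaussianPi n :=
    setIntegral_le_integral hexp_int (Filter.Eventually.of_forall fun x => (Real.exp_pos _).le)
  have hchain4 : ∫ x, rexp (t * W x - t * s) ∂gaussianPi n ≤ μr := by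
    have h1 : ∫ x, rexp (t * W x - t * s) ∂gaussianPi n
        = (∫ x, rexp (t * W x) ∂gaussianPi n) * rexp (-(t * s)) := by
      simp_rw [sub_eq_add_neg, Real.exp_add]
      rw [integral_mul_const]
    rw [h1]
    calc (∫ x, rexp (t * W x) ∂gaussianPi n) * rexp (-(t * s))
        ≤ rexp (1/8) * rexp (-(t * s)) := by
          exact mul_le_mul_of_nonneg_right hE (Real.exp_pos _).le
      _ = rexp (1/8 - t * s) := by rw [← Real.exp_add]; ring_nf
      _ = rexp (Real.log μr) := by
          rw [hts]
          congr 1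
          rw [hx0def, Real.log_inv]
          ring
      _ = μr := Real.exp_log hpos
  have hfinal : S ≤ 2 * Real.sqrt 2 * σ * μr * (x0 + 9/8) := by
    have h1 : S ≤ s * μr + μr / t := by
      have hh := hchain1
      rw [hSW, hchain2] at hh
      have h2 := (div_le_div_iff_of_pos_right ht).mpr (hchain3.trans hchain4)
      linarith
    have h3 : s * μr + μr / t = 2 * Real.sqrt 2 * σ * μr * (x0 + 9/8) := by
      rw [hsdef, htdef, div_inv_eq_mul]
      ring
    linarith
  have hσle : σ ≤ 2 * Real.sqrt 2 * μr * (x0 + 9/8) := by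
    have hss : σ * σ ≤ σ * (2 * Real.sqrt 2 * μr * (x0 + 9/8)) := by
      calc σ * σ = S := by rw [← hσ2, sq]
        _ ≤ 2 * Real.sqrt 2 * σ * μr * (x0 + 9/8) := hfinal
        _ = σ * (2 * Real.sqrt 2 * μr * (x0 + 9/8)) := by ring
    exact (mul_le_mul_iff_of_pos_left hσ).mp hss
  have hSle : S ≤ 8 * (μr ^ 2 * (x0 + 9/8) ^ 2) := by
    have h1 : S = σ ^ 2 := hσ2.symm
    have h2 : σ ^ 2 ≤ (2 * Real.sqrt 2 * μr * (x0 + 9/8)) ^ 2 := by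
      refine pow_le_pow_left₀ hσ.le hσle 2
    have h3 : (2 * Real.sqrt 2 * μr * (x0 + 9/8)) ^ 2 = 8 * (μr ^ 2 * (x0 + 9/8) ^ 2) := by
      rw [mul_pow, mul_pow, mul_pow, show Real.sqrt 2 ^ 2 = 2 by rw [sq]; exact hrt2]
      ring
    rw [h1, ← h3]
    exact h2
  rw [hL]
  have he1 : 2 * (x0 + 9/8) ≤ Real.exp 1 * (1 + x0) := by
    nlinarith [Real.exp_one_gt_d9]
  have h4 : (2 * (x0 + 9/8)) ^ 2 ≤ (Real.exp 1 * (1 + x0)) ^ 2 :=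
    pow_le_pow_left₀ (by linarith) he1 2
  calc S ≤ 8 * (μr ^ 2 * (x0 + 9/8) ^ 2) := hSle
    _ = 2 * (2 * (x0 + 9/8)) ^ 2 * μr ^ 2 := by ring
    _ ≤ 2 * (Real.exp 1 * (1 + x0)) ^ 2 * μr ^ 2 := by
        refine mul_le_mul_of_nonneg_right (mul_le_mul_of_nonneg_left h4 (by norm_num))
          (sq_nonneg μr)
    _ = 2 * Real.exp 1 ^ 2 * μr ^ 2 * (1 + x0) ^ 2 := by ring
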